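/- Let G be an LCA group. Then every element of G is a compact element if and only if G is the union of its compact open subgroups. -/

import Mathlib

/-!
Given `x`, pick a compact neighbourhood `V` of `1` containing `x`, and make it symmetric.
Finitely many translates `t * V` cover the compact set `V * V`; inducting on words in `V`
then puts the subgroup generated by `V` inside `C * V`, where `C` is the closure of the subgroup
generated by the finite set `t`. If every element is compact, `C` is compact (a product of the
compact closures `closure ⟨g⟩`, `g ∈ t`, as `G` is abelian), so the subgroup generated by `V`
is an open, hence closed, subgroup inside the compact set `C * V`. Conversely, a compact open
subgroup containing `x` is closed, so it contains the compact closure of `⟨x⟩`.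
-/

open Set Filter Topology Pointwise

section CompactElements

variable {G : Type*} [CommGroup G] [TopologicalSpace G] [IsTopologicalGroup G]

theorem isCompact_closure_sup {H K : Subgroup G} (hH : IsCompact (closure (H : Set G)))
    (hK : IsCompact (closure (K : Set G))) : IsCompact (closure ((H ⊔ K : Subgroup G) : Set G)) :=
  (hH.mul hK).closure_of_subset <| by
    rw [Subgroup.mul_normal]
    exact mul_subset_mul subset_closure subset_closure

theorem isCompact_closure_subgroupClosure_of_finite {s : Set G} (hs : s.Finite)
    (h : ∀ x ∈ s, IsCompact (closure (Subgroup.zpowers x : Set G))) :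
    IsCompact (closure (Subgroup.closure s : Set G)) := by
  induction s, hs using Set.Finite.induction_on with
  | empty => simpa using isCompact_singleton.closure
  | @insert a s _ _ ih =>
    rw [insert_eq, Subgroup.closure_union, ← Subgroup.zpowers_eq_closure]
    exact isCompact_closure_sup (h a (mem_insert a s))
      (ih fun x hx => h x (mem_insert_of_mem a hx))

end CompactElements

theorem IsCompact.exists_finite_subset_mul {G : Type*} [Group G] [TopologicalSpace G]
    [IsTopologicalGroup G] {K V : Set G} (hK : IsCompact K) (hV : (interior V).Nonempty) :
    ∃ t : Set G, t.Finite ∧ K ⊆ t * V := by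
  obtain ⟨t, ht⟩ := compact_covered_by_mul_left_translates hK hV
  refine ⟨(t : Set G)⁻¹, t.finite_toSet.inv, fun y hy => ?_⟩
  obtain ⟨g, hg, hgy⟩ := mem_iUnion₂.1 (ht hy)
  exact ⟨g⁻¹, by simpa using hg, g * y, hgy, inv_mul_cancel_left g y⟩

theorem isCompact_closure_zpowers_of_mem {G : Type*} [Group G] [TopologicalSpace G]
    [IsTopologicalGroup G] {H : Subgroup G} (hHc : IsCompact (H : Set G))
    (hHo : IsOpen (H : Set G)) {x : G} (hx : x ∈ H) :
    IsCompact (closure (Subgroup.zpowers x : Set G)) :=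
  hHc.of_isClosed_subset isClosed_closure <|
    closure_minimal (Subgroup.zpowers_le.2 hx) (H.isClosed_of_isOpen hHo)

theorem Subgroup.closure_subset_mul_of_mul_subset {G : Type*} [CommGroup G] {C : Subgroup G}
    {V : Set G} (hV1 : 1 ∈ V) (hVinv : V⁻¹ ⊆ V) (hVV : V * V ⊆ C * V) :
    (closure V : Set G) ⊆ C * V := by
  intro y hy
  induction hy using Subgroup.closure_induction with
  | mem v hv => exact ⟨1, C.one_mem, v, hv, one_mul v⟩
  | one => exact ⟨1, C.one_mem, 1, hV1, one_mul 1⟩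
  | mul a b _ _ ha hb =>
    obtain ⟨c₁, hc₁, v₁, hv₁, rfl⟩ := ha
    obtain ⟨c₂, hc₂, v₂, hv₂, rfl⟩ := hb
    obtain ⟨c₃, hc₃, v₃, hv₃, hv₁₂⟩ := hVV (mul_mem_mul hv₁ hv₂)
    refine ⟨c₁ * c₂ * c₃, C.mul_mem (C.mul_mem hc₁ hc₂) hc₃, v₃, hv₃, ?_⟩
    change c₁ * c₂ * c₃ * v₃ = c₁ * v₁ * (c₂ * v₂)
    rw [mul_mul_mul_comm, ← show c₃ * v₃ = v₁ * v₂ from hv₁₂, mul_assoc]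
  | inv a _ ha =>
    obtain ⟨c, hc, v, hv, rfl⟩ := ha
    exact ⟨c⁻¹, C.inv_mem hc, v⁻¹, hVinv (inv_mem_inv.2 hv), (mul_inv c v).symm⟩

section Elliptic

variable {G : Type*} [CommGroup G] [TopologicalSpace G] [IsTopologicalGroup G]

theorem isCompact_subgroupClosure_of_mem_nhds_one
    (hG : ∀ x : G, IsCompact (closure (Subgroup.zpowers x : Set G))) {V : Set G}
    (hVc : IsCompact V) (hV : V ∈ 𝓝 1) : IsCompact (Subgroup.closure V : Set G) := by
  set W := V ∪ V⁻¹
  have hWc : IsCompact W := hVc.union hVc.inv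
  have hW : W ∈ 𝓝 1 := mem_of_superset hV subset_union_left
  have hWinv : W⁻¹ ⊆ W := by rw [union_inv, inv_inv, union_comm]
  obtain ⟨t, ht, hWW⟩ := (hWc.mul hWc).exists_finite_subset_mul
    ⟨1, mem_interior_iff_mem_nhds.2 hW⟩
  set C := (Subgroup.closure t).topologicalClosure
  have hCc : IsCompact (C : Set G) :=
    isCompact_closure_subgroupClosure_of_finite ht fun x _ => hG x
  have htC : t ⊆ C := Subgroup.subset_closure.trans (Subgroup.le_topologicalClosure _)
  have hsub : (Subgroup.closure W : Set G) ⊆ C * W :=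
    Subgroup.closure_subset_mul_of_mul_subset (mem_of_mem_nhds hW) hWinv
      (hWW.trans (mul_subset_mul_right htC))
  have hclosed : IsClosed (Subgroup.closure W : Set G) :=
    Subgroup.isClosed_of_isOpen _ <|
      Subgroup.isOpen_of_mem_nhds _ (mem_of_superset hW Subgroup.subset_closure)
  have hWV : Subgroup.closure W = Subgroup.closure V := by
    rw [Subgroup.closure_union, Subgroup.closure_inv, sup_idem]
  rw [← hWV]
  exact (hCc.mul hWc).of_isClosed_subset hclosed hsub

theorem exists_isCompact_isOpen_subgroup_mem [LocallyCompactSpace G]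
    (hG : ∀ x : G, IsCompact (closure (Subgroup.zpowers x : Set G))) (x : G) :
    ∃ H : Subgroup G, (IsCompact (H : Set G) ∧ IsOpen (H : Set G)) ∧ x ∈ H := by
  obtain ⟨K, hKc, hK⟩ := exists_compact_mem_nhds (1 : G)
  have hxK : insert x K ∈ 𝓝 1 := mem_of_superset hK (subset_insert x K)
  exact ⟨Subgroup.closure (insert x K),
    ⟨isCompact_subgroupClosure_of_mem_nhds_one hG (hKc.insert x) hxK,
      Subgroup.isOpen_of_mem_nhds _ (mem_of_superset hxK Subgroup.subset_closure)⟩,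
    Subgroup.subset_closure (mem_insert x K)⟩

end Elliptic

theorem stmt_2_general (G : Type*) [CommGroup G] [TopologicalSpace G] [IsTopologicalGroup G]
    [LocallyCompactSpace G] :
    (∀ x : G, IsCompact (closure ((Subgroup.zpowers x : Subgroup G) : Set G))) ↔
      (⋃ H ∈ {H : Subgroup G | IsCompact (H : Set G) ∧ IsOpen (H : Set G)}, (H : Set G)) =
        Set.univ := by
  simp only [eq_univ_iff_forall, mem_iUnion₂, mem_ofPred_eq, SetLike.mem_coe, exists_prop]
  refine ⟨exists_isCompact_isOpen_subgroup_mem, fun h x => ?_⟩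
  obtain ⟨H, ⟨hHc, hHo⟩, hxH⟩ := h x
  exact isCompact_closure_zpowers_of_mem hHc hHo hxH

/-- An LCA group `G` has every element compact (i.e. `G` is elliptic) if and only
if `G` is the union of its compact open subgroups. -/
theorem stmt_2 (G : Type*) [CommGroup G] [TopologicalSpace G] [IsTopologicalGroup G]
    [LocallyCompactSpace G] [T2Space G] :
    (∀ x : G, IsCompact (closure ((Subgroup.zpowers x : Subgroup G) : Set G))) ↔
      (⋃ H ∈ {H : Subgroup G | IsCompact (H : Set G) ∧ IsOpen (H : Set G)}, (H : Set G)) =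
        Set.univ :=
  stmt_2_general G
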